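/- Let A be an m×n real matrix, b ∈ ℝ^m, p ≥ 1, γ > 0, and let (μ_k)_{k≥0} be a nondecreasing sequence of positive reals with ∑_k 1/√μ_k < ∞. Let (u^k), (v^k), (λ^k) be sequences in ℝ^n satisfying for all k: u^{k+1} minimizes w ↦ γ‖∇w‖₀ + (μ_k/2)‖w − (v^k − λ^k/μ_k)‖₂²; v^{k+1} minimizes w ↦ ‖Aw − b‖_p^p + (μ_k/2)‖w − (u^{k+1} + λ^k/μ_k)‖₂²; and λ^{k+1} = λ^k + μ_k(u^{k+1} − v^{k+1}). Then there exists a constant C > 0, independent of k, such that ‖v^{k+1} − v^k‖₂ ≤ C/√μ_k for all k; in particular (v^k) is a Cauchy sequence. -/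

import Mathlib

/-!
Put `c_k = u^{k+1} + λ^k/μ_k`, so that `v^{k+1}` is the proximal point at `c_k` of the convex
data term `f(w) = ‖Aw − b‖_p^p`. Testing the `u`-step against `w = v^k − λ^k/μ_k` gives
`μ_k ‖v^k − c_k‖² ≤ 2γn`; testing the `v`-step against `v^k` then gives
`f(v^{k+1}) ≤ f(v^k) + γn`, so `f(v^k)` grows at most linearly in `k`.
A convex function bounded by `M` on the unit ball around its proximal point `x` satisfies
`μ ‖x − c‖ ≤ M − f(x)`, and on that ball `f ≤ 2^{p-1} (f(x) + m‖A‖^p)`; hence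
`μ_k ‖v^{k+1} − c_k‖ = O(k + 1)`. As `μ` is nondecreasing,
`(k + 1)/√μ_k ≤ ∑_j 1/√μ_j`, so both `‖v^{k+1} − c_k‖` and `‖v^k − c_k‖` are `O(1/√μ_k)`.
-/

open Filter Topology
open scoped BigOperators

noncomputable section

/-- The jump set of a signal `x ∈ ℝⁿ`: the indices `i` with `x i ≠ x (i+1)`. -/
def jumpSet {n : ℕ} (x : Fin n → ℝ) : Set (Fin n) :=
  {i | ∃ h : (i : ℕ) + 1 < n, x i ≠ x ⟨(i : ℕ) + 1, h⟩}

/-- `‖∇x‖₀`: the number of jumps of `x`. -/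
def nJumps {n : ℕ} (x : Fin n → ℝ) : ℕ := (jumpSet x).ncard

open Set

theorem nJumps_le {n : ℕ} (x : Fin n → ℝ) : nJumps x ≤ n := by
  simpa [nJumps, ncard_univ] using ncard_le_ncard (subset_univ (jumpSet x))

theorem half_mul_sum_sq_le_of_potts_minimizer {n : ℕ} {γ μ : ℝ} (hγ : 0 ≤ γ) {x z : Fin n → ℝ}
    (hmin : ∀ w : Fin n → ℝ, γ * (nJumps x : ℝ) + μ / 2 * ∑ i, (x i - z i) ^ 2 ≤
      γ * (nJumps w : ℝ) + μ / 2 * ∑ i, (w i - z i) ^ 2) :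
    μ / 2 * ∑ i, (x i - z i) ^ 2 ≤ γ * n := by
  have hz := hmin z
  simp only [sub_self, zero_pow two_ne_zero, Finset.sum_const_zero, mul_zero, add_zero] at hz
  have hjumps : γ * (nJumps z : ℝ) ≤ γ * n := by gcongr; exact_mod_cast nJumps_le z
  have : 0 ≤ γ * (nJumps x : ℝ) := by positivity
  linarith

theorem Real.rpow_add_le_mul_rpow_add_rpow {x y : ℝ} (hx : 0 ≤ x) (hy : 0 ≤ y) {p : ℝ}
    (hp : 1 ≤ p) : (x + y) ^ p ≤ 2 ^ (p - 1) * (x ^ p + y ^ p) := by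
  lift x to NNReal using hx
  lift y to NNReal using hy
  exact_mod_cast NNReal.rpow_add_le_mul_rpow_add_rpow x y hp

theorem ConvexOn.rpow {E : Type*} [AddCommGroup E] [Module ℝ E] {s : Set E} {g : E → ℝ}
    (hg : ConvexOn ℝ s g) (hg₀ : ∀ x ∈ s, 0 ≤ g x) {p : ℝ} (hp : 1 ≤ p) :
    ConvexOn ℝ s fun x => g x ^ p := by
  refine ⟨hg.1, fun x hx y hy a b ha hb hab => ?_⟩
  calc g (a • x + b • y) ^ p ≤ (a • g x + b • g y) ^ p :=
        Real.rpow_le_rpow (hg₀ _ (hg.1 hx hy ha hb hab)) (hg.2 hx hy ha hb hab) (by linarith)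
    _ ≤ a • g x ^ p + b • g y ^ p := (convexOn_rpow hp).2 (hg₀ x hx) (hg₀ y hy) ha hb hab

theorem le_add_mul_of_forall_succ_le_add {a : ℕ → ℝ} {D : ℝ} (h : ∀ k, a (k + 1) ≤ a k + D)
    (k : ℕ) : a k ≤ a 0 + k * D := by
  induction k with
  | zero => simp
  | succ k ih => push_cast; linarith [h k]

theorem Antitone.succ_mul_le_tsum {g : ℕ → ℝ} (hg : Antitone g) (hg₀ : ∀ k, 0 ≤ g k)
    (hs : Summable g) (k : ℕ) : (k + 1) * g k ≤ ∑' j, g j :=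
  calc (k + 1) * g k = ∑ _j ∈ Finset.range (k + 1), g k := by simp
    _ ≤ ∑ j ∈ Finset.range (k + 1), g j :=
      Finset.sum_le_sum fun j hj => hg (Nat.lt_succ_iff.1 (Finset.mem_range.1 hj))
    _ ≤ ∑' j, g j := hs.sum_le_tsum _ fun j _ => hg₀ j

section NormedSpace

variable {E : Type*} [NormedAddCommGroup E] [NormedSpace ℝ E]

theorem ConvexOn.mul_norm_sub_le_of_minimizer {f : E → ℝ} (hf : ConvexOn ℝ univ f)
    {μ M : ℝ} {x c : E}
    (hmin : ∀ w, f x + μ / 2 * ‖x - c‖ ^ 2 ≤ f w + μ / 2 * ‖w - c‖ ^ 2)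
    (hM : ∀ y, ‖y - x‖ ≤ 1 → f y ≤ M) :
    μ * ‖x - c‖ ≤ M - f x := by
  rcases (norm_nonneg (x - c)).eq_or_lt with hd | hd
  · rw [← hd, mul_zero, sub_nonneg]
    exact hM x (by simp)
  set d := ‖x - c‖ with hd_def
  set y := x + d⁻¹ • (c - x)
  have hy : f y ≤ M :=
    hM y (by simp [y, norm_smul, norm_sub_rev c x, abs_of_pos hd, ← hd_def, hd.ne'])
  -- compare `x` with the point at distance `t` from it towards `c`, then let `t → 0`
  have hstep : ∀ t ∈ Ioo (0 : ℝ) 1, μ * d ≤ M - f x + μ / 2 * t := by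
    intro t ⟨ht0, ht1⟩
    set w := (1 - t) • x + t • y
    have hfw : f w ≤ (1 - t) * f x + t * f y :=
      hf.2 (mem_univ x) (mem_univ y) (sub_nonneg.2 ht1.le) ht0.le (by ring)
    have hwc : w - c = (1 - t / d) • (x - c) := by
      simp only [w, y, smul_add, smul_smul, smul_sub, sub_smul, one_smul, div_eq_mul_inv]
      abel_nf
    have hnorm : ‖w - c‖ ^ 2 = (d - t) ^ 2 := by
      rw [hwc, norm_smul, mul_pow, Real.norm_eq_abs, sq_abs, ← hd_def]
      field_simp
    have hcompare := hmin w
    rw [hnorm] at hcompare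
    have : t * (μ * d) ≤ t * (M - f x + μ / 2 * t) := by nlinarith
    exact le_of_mul_le_mul_left this ht0
  have hlim : Tendsto (fun t => M - f x + μ / 2 * t) (𝓝[>] 0) (𝓝 (M - f x)) := by
    have : Continuous (fun t : ℝ => M - f x + μ / 2 * t) := by fun_prop
    simpa using (this.tendsto 0).mono_left nhdsWithin_le_nhds
  exact ge_of_tendsto hlim (eventually_of_mem (Ioo_mem_nhdsGT one_pos) hstep)

section LinearResidual

variable {ι : Type*} [Fintype ι] (T : E →L[ℝ] ι → ℝ) (b : ι → ℝ) {p : ℝ}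

theorem convexOn_sum_abs_sub_rpow (hp : 1 ≤ p) :
    ConvexOn ℝ univ fun w => ∑ i, |T w i - b i| ^ p := by
  have hterm (i : ι) : ConvexOn ℝ univ fun w => |T w i - b i| ^ p := by
    simpa [Real.dist_eq] using ((convexOn_dist (b i) convex_univ).comp_linearMap
      (LinearMap.proj (R := ℝ) (φ := fun _ : ι => ℝ) i ∘ₗ T.toLinearMap)).rpow
        (fun _ _ => dist_nonneg) hp
  refine ⟨convex_univ, fun x _ y _ a c ha hc hac => ?_⟩
  simp only [smul_eq_mul, Finset.mul_sum, ← Finset.sum_add_distrib]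
  exact Finset.sum_le_sum fun i _ => (hterm i).2 trivial trivial ha hc hac

theorem sum_abs_sub_rpow_le_of_norm_sub_le_one (hp : 1 ≤ p) {x y : E} (hxy : ‖y - x‖ ≤ 1) :
    ∑ i, |T y i - b i| ^ p ≤
      2 ^ (p - 1) * (∑ i, |T x i - b i| ^ p + Fintype.card ι * ‖T‖ ^ p) := by
  have hrow (i : ι) : |T y i - b i| ≤ |T x i - b i| + ‖T‖ := calc
    |T y i - b i| ≤ |T x i - b i| + |T (y - x) i| := by
      rw [map_sub, Pi.sub_apply]
      exact (abs_sub_le _ _ _).trans_eq (by rw [add_comm, abs_sub_comm (T x i)])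
    _ ≤ |T x i - b i| + ‖T‖ := by
      gcongr
      calc |T (y - x) i| ≤ ‖T (y - x)‖ := norm_le_pi_norm (T (y - x)) i
        _ ≤ ‖T‖ * ‖y - x‖ := T.le_opNorm _
        _ ≤ ‖T‖ := mul_le_of_le_one_right (norm_nonneg T) hxy
  calc ∑ i, |T y i - b i| ^ p ≤ ∑ i, 2 ^ (p - 1) * (|T x i - b i| ^ p + ‖T‖ ^ p) :=
        Finset.sum_le_sum fun i _ =>
          (Real.rpow_le_rpow (abs_nonneg _) (hrow i) (by linarith)).trans
            (Real.rpow_add_le_mul_rpow_add_rpow (abs_nonneg _) (norm_nonneg T) hp)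
    _ = 2 ^ (p - 1) * (∑ i, |T x i - b i| ^ p + Fintype.card ι * ‖T‖ ^ p) := by
        rw [← Finset.mul_sum, Finset.sum_add_distrib, Finset.sum_const, Finset.card_univ,
          nsmul_eq_mul]

end LinearResidual

section ProximalIteration

variable {f : E → ℝ} {K L D : ℝ} {μ : ℕ → ℝ} {v c : ℕ → E}

theorem mul_norm_succ_sub_le_mul_succ (hf : ConvexOn ℝ univ f) (hf₀ : ∀ x, 0 ≤ f x)
    (hK : 0 ≤ K) (hL : 0 ≤ L) (hgrowth : ∀ x y, ‖y - x‖ ≤ 1 → f y ≤ K * (f x + L))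
    (hμpos : ∀ k, 0 < μ k) (hvc : ∀ k, μ k / 2 * ‖v k - c k‖ ^ 2 ≤ D)
    (hv : ∀ k w, f (v (k + 1)) + μ k / 2 * ‖v (k + 1) - c k‖ ^ 2 ≤
      f w + μ k / 2 * ‖w - c k‖ ^ 2) (k : ℕ) :
    μ k * ‖v (k + 1) - c k‖ ≤ K * (f (v 0) + D + L) * (k + 1) := by
  have hquad (k : ℕ) (z : E) : 0 ≤ μ k / 2 * ‖z‖ ^ 2 := by have := hμpos k; positivity
  have hD : 0 ≤ D := (hquad 0 _).trans (hvc 0)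
  have hgrow : f (v (k + 1)) ≤ f (v 0) + (k + 1) * D := by
    have := le_add_mul_of_forall_succ_le_add (a := fun j => f (v j))
      (fun j => by linarith [hv j (v j), hvc j, hquad j (v (j + 1) - c j)]) (k + 1)
    exact_mod_cast this
  calc μ k * ‖v (k + 1) - c k‖ ≤ K * (f (v (k + 1)) + L) - f (v (k + 1)) :=
        hf.mul_norm_sub_le_of_minimizer (hv k) (hgrowth _)
    _ ≤ K * (f (v 0) + (k + 1) * D + L) := by nlinarith [hf₀ (v (k + 1))]
    _ ≤ K * (f (v 0) + D + L) * (k + 1) := by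
        have : 0 ≤ (k : ℝ) := k.cast_nonneg
        nlinarith [mul_nonneg hK (add_nonneg (hf₀ (v 0)) hL)]

theorem exists_norm_succ_sub_le_div_sqrt_and_cauchySeq (hf : ConvexOn ℝ univ f)
    (hf₀ : ∀ x, 0 ≤ f x) (hK : 0 ≤ K) (hL : 0 ≤ L)
    (hgrowth : ∀ x y, ‖y - x‖ ≤ 1 → f y ≤ K * (f x + L))
    (hμpos : ∀ k, 0 < μ k) (hμmono : Monotone μ) (hμsum : Summable fun k => 1 / √(μ k))
    (hvc : ∀ k, μ k / 2 * ‖v k - c k‖ ^ 2 ≤ D)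
    (hv : ∀ k w, f (v (k + 1)) + μ k / 2 * ‖v (k + 1) - c k‖ ^ 2 ≤
      f w + μ k / 2 * ‖w - c k‖ ^ 2) :
    ∃ C, 0 < C ∧ (∀ k, ‖v (k + 1) - v k‖ ≤ C / √(μ k)) ∧ CauchySeq v := by
  set B := K * (f (v 0) + D + L)
  set S := ∑' k, 1 / √(μ k)
  have hD : 0 ≤ D :=
    (by have := hμpos 0; positivity : 0 ≤ μ 0 / 2 * ‖v 0 - c 0‖ ^ 2).trans (hvc 0)
  have hB : 0 ≤ B := mul_nonneg hK (by linarith [hf₀ (v 0)])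
  have hS₀ : 0 ≤ S := tsum_nonneg fun k => by positivity
  refine ⟨B * S + √(2 * D) + 1, by positivity, ?_⟩
  have hbound (k : ℕ) : ‖v (k + 1) - v k‖ ≤ (B * S + √(2 * D) + 1) / √(μ k) := by
    have hsμ : 0 < √(μ k) := Real.sqrt_pos.2 (hμpos k)
    have hsucc : (k + 1 : ℝ) ≤ S * √(μ k) := by
      have := Antitone.succ_mul_le_tsum (fun i j hij => one_div_le_one_div_of_le
        (Real.sqrt_pos.2 (hμpos i)) (Real.sqrt_le_sqrt (hμmono hij)))
        (fun k => by positivity) hμsum k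
      rwa [mul_one_div, div_le_iff₀ hsμ] at this
    have hfar : ‖v (k + 1) - c k‖ * √(μ k) ≤ B * S := by
      refine le_of_mul_le_mul_right ?_ hsμ
      calc ‖v (k + 1) - c k‖ * √(μ k) * √(μ k) = μ k * ‖v (k + 1) - c k‖ := by
            rw [mul_assoc, Real.mul_self_sqrt (hμpos k).le, mul_comm]
        _ ≤ B * (k + 1) :=
            mul_norm_succ_sub_le_mul_succ hf hf₀ hK hL hgrowth hμpos hvc hv k
        _ ≤ B * (S * √(μ k)) := mul_le_mul_of_nonneg_left hsucc hB
        _ = B * S * √(μ k) := (mul_assoc _ _ _).symm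
    have hnear : ‖v k - c k‖ * √(μ k) ≤ √(2 * D) := by
      apply Real.le_sqrt_of_sq_le
      rw [mul_pow, Real.sq_sqrt (hμpos k).le]
      linarith [hvc k]
    rw [le_div_iff₀ hsμ]
    calc ‖v (k + 1) - v k‖ * √(μ k) ≤ (‖v (k + 1) - c k‖ + ‖v k - c k‖) * √(μ k) := by
          gcongr
          exact (norm_sub_le_norm_sub_add_norm_sub _ (c k) _).trans_eq
            (by rw [norm_sub_rev (c k)])
      _ ≤ B * S + √(2 * D) + 1 := by rw [add_mul]; linarith
  refine ⟨hbound, cauchySeq_of_dist_le_of_summable _ (fun k => ?_)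
    (hμsum.mul_left (B * S + √(2 * D) + 1))⟩
  rw [dist_comm, dist_eq_norm, mul_one_div]
  exact hbound k

end ProximalIteration

end NormedSpace

theorem admm_v_cauchy_general (n m : ℕ)
    (A : Matrix (Fin m) (Fin n) ℝ) (b : Fin m → ℝ)
    (p γ : ℝ) (hp : 1 ≤ p) (hγ : 0 < γ)
    (μ : ℕ → ℝ) (hμpos : ∀ k, 0 < μ k) (hμmono : Monotone μ)
    (hμsum : Summable fun k => 1 / Real.sqrt (μ k))
    (u v lam : ℕ → Fin n → ℝ)
    (hu : ∀ k : ℕ, ∀ w : Fin n → ℝ,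
      γ * (nJumps (u (k + 1)) : ℝ) +
          μ k / 2 * ∑ i, (u (k + 1) i - (v k i - lam k i / μ k)) ^ 2 ≤
        γ * (nJumps w : ℝ) + μ k / 2 * ∑ i, (w i - (v k i - lam k i / μ k)) ^ 2)
    (hv : ∀ k : ℕ, ∀ w : Fin n → ℝ,
      (∑ i, |A.mulVec (v (k + 1)) i - b i| ^ p) +
          μ k / 2 * ∑ i, (v (k + 1) i - (u (k + 1) i + lam k i / μ k)) ^ 2 ≤
        (∑ i, |A.mulVec w i - b i| ^ p) +
          μ k / 2 * ∑ i, (w i - (u (k + 1) i + lam k i / μ k)) ^ 2) :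
    ∃ C : ℝ, 0 < C ∧
      (∀ k : ℕ, Real.sqrt (∑ i, (v (k + 1) i - v k i) ^ 2) ≤ C / Real.sqrt (μ k)) ∧
      CauchySeq v := by
  set T : EuclideanSpace ℝ (Fin n) →L[ℝ] Fin m → ℝ := LinearMap.toContinuousLinearMap
    (Matrix.toLin' A ∘ₗ (WithLp.linearEquiv 2 ℝ (Fin n → ℝ)).toLinearMap)
  set c : ℕ → EuclideanSpace ℝ (Fin n) :=
    fun k => WithLp.toLp 2 (fun i => u (k + 1) i + lam k i / μ k)
  have hvc (k : ℕ) : μ k / 2 * ‖WithLp.toLp 2 (v k) - c k‖ ^ 2 ≤ γ * n := by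
    simp only [EuclideanSpace.real_norm_sq_eq]
    convert half_mul_sum_sq_le_of_potts_minimizer hγ.le (hu k) using 3 with i
    simp only [c, PiLp.sub_apply]
    ring
  obtain ⟨C, hC, hbound, hcauchy⟩ := exists_norm_succ_sub_le_div_sqrt_and_cauchySeq
    (convexOn_sum_abs_sub_rpow T b hp) (fun _ => by positivity) (by positivity) (by positivity)
    (fun _ _ => sum_abs_sub_rpow_le_of_norm_sub_le_one T b hp) hμpos hμmono hμsum hvc
    (fun k w => by simpa [EuclideanSpace.real_norm_sq_eq, T, c] using hv k w.ofLp)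
  refine ⟨C, hC, fun k => ?_, (PiLp.uniformContinuous_ofLp 2 _).comp_cauchySeq hcauchy⟩
  simpa [EuclideanSpace.norm_eq] using hbound k

/-- Along the iPotts ADMM iteration, there is a constant `C > 0` independent
of `k` with `‖v^{k+1} − v^k‖₂ ≤ C/√μ_k` for all `k`; in particular `(v^k)` is
a Cauchy sequence. -/
theorem admm_v_cauchy (n m : ℕ)
    (A : Matrix (Fin m) (Fin n) ℝ) (b : Fin m → ℝ)
    (p γ : ℝ) (hp : 1 ≤ p) (hγ : 0 < γ)
    (μ : ℕ → ℝ) (hμpos : ∀ k, 0 < μ k) (hμmono : Monotone μ)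
    (hμsum : Summable fun k => 1 / Real.sqrt (μ k))
    (u v lam : ℕ → Fin n → ℝ)
    (hu : ∀ k : ℕ, ∀ w : Fin n → ℝ,
      γ * (nJumps (u (k + 1)) : ℝ) +
          μ k / 2 * ∑ i, (u (k + 1) i - (v k i - lam k i / μ k)) ^ 2 ≤
        γ * (nJumps w : ℝ) + μ k / 2 * ∑ i, (w i - (v k i - lam k i / μ k)) ^ 2)
    (hv : ∀ k : ℕ, ∀ w : Fin n → ℝ,
      (∑ i, |A.mulVec (v (k + 1)) i - b i| ^ p) +
          μ k / 2 * ∑ i, (v (k + 1) i - (u (k + 1) i + lam k i / μ k)) ^ 2 ≤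
        (∑ i, |A.mulVec w i - b i| ^ p) +
          μ k / 2 * ∑ i, (w i - (u (k + 1) i + lam k i / μ k)) ^ 2)
    (hlam : ∀ k : ℕ, lam (k + 1) = lam k + μ k • (u (k + 1) - v (k + 1))) :
    ∃ C : ℝ, 0 < C ∧
      (∀ k : ℕ, Real.sqrt (∑ i, (v (k + 1) i - v k i) ^ 2) ≤ C / Real.sqrt (μ k)) ∧
      CauchySeq v :=
  admm_v_cauchy_general n m A b p γ hp hγ μ hμpos hμmono hμsum u v lam hu hv
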